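/- Correctness of the parametric monitoring algorithm B(M): for any monitor M = (S, E, C, i, σ, γ) and any parametric trace τ, (1) the domain of B(M)(τ).Δ equals B(M)(τ).Θ, which equals Θ_τ; (2) B(M)(τ).Δ(θ) = σ(i, τ↾θ) and B(M)(τ).Γ(θ) = γ(σ(i, τ↾θ)) for every θ ∈ B(M)(τ).Θ; and (3) for every parameter instance θ : X ⇀ V, σ(i, τ↾θ) = B(M)(τ).Δ(max (θ]_{B(M)(τ).Θ}) and γ(σ(i, τ↾θ)) = B(M)(τ).Γ(max (θ]_{B(M)(τ).Θ}). -/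

import Mathlib

/- Partial functions X ⇀ V are modeled as functions `X → Option V`. -/

variable {X V E : Type*}

/-- `θ` is less informative than `θ'` (θ ⊑ θ'): wherever `θ` is defined, `θ'` is
defined with the same value. -/
def PFle (θ θ' : X → Option V) : Prop :=
  ∀ x v, θ x = some v → θ' x = some v

/-- The everywhere-undefined partial function ⊥. -/
def pbot : X → Option V := fun _ => none

/-- `θ'` is an upper bound of the set `Θ` of partial functions. -/
def IsUB (Θ : Set (X → Option V)) (θ' : X → Option V) : Prop :=
  ∀ θ ∈ Θ, PFle θ θ'

/-- `θ'` is the least upper bound (⊔Θ) of the set `Θ` of partial functions. -/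
def IsLubPF (Θ : Set (X → Option V)) (θ' : X → Option V) : Prop :=
  IsUB Θ θ' ∧ ∀ θ'', IsUB Θ θ'' → PFle θ' θ''

/-- Θ is lub closed: every subset of Θ admitting an upper bound has its lub in Θ. -/
def LubClosed (Θ : Set (X → Option V)) : Prop :=
  ∀ Θ' ⊆ Θ, ∀ u, IsLubPF Θ' u → u ∈ Θ

/-- The lub closure of Θ: the intersection of all lub closed sets including Θ. -/
def lubClosure (Θ : Set (X → Option V)) : Set (X → Option V) :=
  ⋂₀ {Θ' | Θ ⊆ Θ' ∧ LubClosed Θ'}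

/-- (θ]_Θ : the elements of Θ that are less informative than θ. -/
def below (θ : X → Option V) (Θ : Set (X → Option V)) : Set (X → Option V) :=
  {θ'' ∈ Θ | PFle θ'' θ}

/-- {θ} ⊔ Θ : the set of all existing lubs θ ⊔ θ'' with θ'' ∈ Θ. -/
def joinOne (θ : X → Option V) (Θ : Set (X → Option V)) : Set (X → Option V) :=
  {θ' | ∃ θ'' ∈ Θ, IsLubPF {θ, θ''} θ'}

/-- max (θ]_Θ : the maximum element of (θ]_Θ (well defined when Θ is lub closed). -/
noncomputable def maxBelow (Θ : Set (X → Option V)) (θ : X → Option V) :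
    X → Option V :=
  Classical.epsilon fun m => m ∈ below θ Θ ∧ ∀ q ∈ below θ Θ, PFle q m

/-- A parametric event is a pair e⟨θ⟩; a parametric trace is a finite list of
parametric events. Θ_τ is the lub closure of the parameter instances occurring in τ. -/
def ThetaOf (τ : List (E × (X → Option V))) : Set (X → Option V) :=
  lubClosure {θ | ∃ e : E, (e, θ) ∈ τ}

/-- The θ-trace traceSlice τ↾θ : keep (in order) the base events of τ whose parameter
instance is ⊑ θ, dropping the parameter instances. -/
noncomputable def traceSlice (τ : List (E × (X → Option V))) (θ : X → Option V) :
    List E :=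
  (τ.filter fun p => @decide (PFle p.2 θ) (Classical.propDecidable _)).map Prod.fst

/-- The transition function of a monitor extended to traces:
σ(s, ε) = s and σ(s, w e) = σ(σ(s, w), e). -/
def runMon {S : Type*} (σ : S → E → S) (s : S) (w : List E) : S :=
  w.foldl σ s

/-- The state of algorithm B⟨X⟩(M): the partial map Δ from parameter instances to
monitor states and the set Θ of parameter instances.  (The partial map Γ from
parameter instances to output categories is Δ composed with γ.) -/
structure BState (X V S : Type*) where
  Δ : (X → Option V) → Option S
  Th : Set (X → Option V)

/- One step of algorithm B⟨X⟩(M), processing the parametric event ev = e⟨θ⟩: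
for each θ' ∈ {θ} ⊔ Θ, set Δ(θ') to σ(Δ(max (θ']_Θ)), e);
then Θ becomes {⊥, θ} ⊔ Θ = Θ ∪ ({θ} ⊔ Θ). -/
open Classical in
noncomputable def Bstep {S : Type*} (σ : S → E → S)
    (s : BState X V S) (ev : E × (X → Option V)) : BState X V S where
  Δ := fun θ' =>
    if θ' ∈ joinOne ev.2 s.Th then (s.Δ (maxBelow s.Th θ')).map (fun st => σ st ev.1)
    else s.Δ θ'
  Th := s.Th ∪ joinOne ev.2 s.Th

/- The initial state of algorithm B⟨X⟩(M): Δ defined only on ⊥, with value the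
initial state i, and Θ = {⊥}. -/
open Classical in
noncomputable def Binit {S : Type*} (i : S) : BState X V S where
  Δ := fun θ' => if θ' = pbot then some i else none
  Th := {pbot}

/-- Algorithm B⟨X⟩(M) run on a parametric trace, processing events first to last. -/
noncomputable def Brun {S : Type*} (i : S) (σ : S → E → S)
    (τ : List (E × (X → Option V))) : BState X V S :=
  τ.foldl (Bstep σ) (Binit i)

/-- The table Γ of algorithm B⟨X⟩(M): Γ(θ') = γ(Δ(θ')) for θ' in the domain of Δ. -/
noncomputable def BGamma {S C : Type*} (γ : S → C) (s : BState X V S) :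
    (X → Option V) → Option C :=
  fun θ' => (s.Δ θ').map γ
/-!
Partial functions ordered by `⊑` form a bounded-complete poset, so in a lub closed set `Θ`
every `θ` has a largest element `max (θ]_Θ` below it; when `Θ` contains every parameter
instance of `τ`, an event of `τ` lies below `θ` iff it lies below `max (θ]_Θ`, so the two
slices of `τ` coincide. Induction on `τ` then maintains `Θ = Θ_τ` and `Δ(θ) = σ(i, τ↾θ)` on
`Θ` (and nowhere else): the closure of the instances of `τ e⟨θ⟩` is `Θ_τ ∪ ({θ} ⊔ Θ_τ)`, and
the instances that see the new event are exactly those of `{θ} ⊔ Θ_τ`, each of which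
continues from the state of its largest predecessor in `Θ_τ`.
-/

theorem PFle.refl (θ : X → Option V) : PFle θ θ := fun _ _ h => h

theorem PFle.trans {a b c : X → Option V} (hab : PFle a b) (hbc : PFle b c) : PFle a c :=
  fun x v h => hbc x v (hab x v h)

theorem pbot_pfle (θ : X → Option V) : PFle pbot θ :=
  fun _ v h => (Option.some_ne_none v h.symm).elim

theorem eq_pbot_of_pfle_pbot {θ : X → Option V} (h : PFle θ pbot) : θ = pbot := by
  funext x
  cases hx : θ x with
  | none => rfl
  | some v => exact (h x v hx).symm

theorem isUB_pair {a b c : X → Option V} : IsUB {a, b} c ↔ PFle a c ∧ PFle b c := by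
  simp only [IsUB, Set.forall_mem_insert, Set.mem_singleton_iff, forall_eq]

theorem isLubPF_pair_of_pfle {a b : X → Option V} (h : PFle a b) : IsLubPF {a, b} b :=
  ⟨isUB_pair.2 ⟨h, PFle.refl b⟩, fun _ hc => (isUB_pair.1 hc).2⟩

theorem isLubPF_empty : IsLubPF (∅ : Set (X → Option V)) pbot :=
  ⟨fun _ h => absurd h (Set.notMem_empty _), fun θ _ => pbot_pfle θ⟩

theorem exists_isLubPF_of_isUB {Θ : Set (X → Option V)} {u : X → Option V}
    (hu : IsUB Θ u) : ∃ w, IsLubPF Θ w := by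
  classical
  -- `u` restricted to the coordinates where some element of `Θ` is defined
  refine ⟨fun x => if ∃ θ ∈ Θ, ∃ a, θ x = some a then u x else none, ?_, ?_⟩
  · intro θ hθ x v hx
    dsimp only
    rw [if_pos ⟨θ, hθ, v, hx⟩]
    exact hu θ hθ x v hx
  · intro w hw x v hx
    dsimp only at hx
    split_ifs at hx with hdef
    obtain ⟨θ, hθ, a, ha⟩ := hdef
    obtain rfl : a = v := Option.some.inj ((hu θ hθ x a ha).symm.trans hx)
    exact hw θ hθ x a ha

theorem maxBelow_spec {Θ : Set (X → Option V)} (hc : LubClosed Θ) (θ : X → Option V) :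
    maxBelow Θ θ ∈ below θ Θ ∧ ∀ q ∈ below θ Θ, PFle q (maxBelow Θ θ) := by
  have hub : IsUB (below θ Θ) θ := fun _ hq => hq.2
  obtain ⟨w, hw⟩ := exists_isLubPF_of_isUB hub
  exact Classical.epsilon_spec
    (p := fun m => m ∈ below θ Θ ∧ ∀ q ∈ below θ Θ, PFle q m)
    ⟨w, ⟨hc _ (fun _ hq => hq.1) w hw, hw.2 θ hub⟩, hw.1⟩

theorem LubClosed.pbot_mem {Θ : Set (X → Option V)} (hc : LubClosed Θ) : pbot ∈ Θ :=
  hc ∅ (Set.empty_subset Θ) pbot isLubPF_empty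

theorem subset_lubClosure (B : Set (X → Option V)) : B ⊆ lubClosure B :=
  fun _ hθ => Set.mem_sInter.2 fun _ hT => hT.1 hθ

theorem lubClosed_lubClosure (B : Set (X → Option V)) : LubClosed (lubClosure B) :=
  fun Θ' hsub u hu => Set.mem_sInter.2 fun T hT =>
    hT.2 Θ' (fun _ ha => Set.mem_sInter.1 (hsub ha) T hT) u hu

theorem lubClosure_minimal {B T : Set (X → Option V)} (hBT : B ⊆ T) (hT : LubClosed T) :
    lubClosure B ⊆ T :=
  fun _ ha => Set.mem_sInter.1 ha T ⟨hBT, hT⟩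

theorem lubClosure_mono {B B' : Set (X → Option V)} (h : B ⊆ B') :
    lubClosure B ⊆ lubClosure B' :=
  lubClosure_minimal (h.trans (subset_lubClosure B')) (lubClosed_lubClosure B')

theorem lubClosed_singleton_pbot : LubClosed ({pbot} : Set (X → Option V)) := by
  intro Θ' hsub u hu
  refine eq_pbot_of_pfle_pbot (hu.2 pbot fun q hq => ?_)
  rw [hsub hq]
  exact PFle.refl pbot

theorem lubClosure_empty : lubClosure (∅ : Set (X → Option V)) = {pbot} :=
  (lubClosure_minimal (Set.empty_subset _) lubClosed_singleton_pbot).antisymm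
    (Set.singleton_subset_iff.2 (lubClosed_lubClosure ∅).pbot_mem)

theorem pfle_of_mem_joinOne {θ θ' : X → Option V} {Θ : Set (X → Option V)}
    (h : θ' ∈ joinOne θ Θ) : PFle θ θ' := by
  obtain ⟨_, _, hlub⟩ := h
  exact (isUB_pair.1 hlub.1).1

theorem mem_joinOne_of_pfle {θ θ' : X → Option V} {Θ : Set (X → Option V)}
    (hθ' : θ' ∈ Θ) (h : PFle θ θ') : θ' ∈ joinOne θ Θ :=
  ⟨θ', hθ', isLubPF_pair_of_pfle h⟩

theorem LubClosed.self_mem_joinOne {Θ : Set (X → Option V)} (hc : LubClosed Θ)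
    (θ : X → Option V) : θ ∈ joinOne θ Θ :=
  ⟨pbot, hc.pbot_mem, Set.pair_comm pbot θ ▸ isLubPF_pair_of_pfle (pbot_pfle θ)⟩

theorem LubClosed.joinOne_subset {T Θ : Set (X → Option V)} {θ : X → Option V}
    (hT : LubClosed T) (hθ : θ ∈ T) (hΘ : Θ ⊆ T) : joinOne θ Θ ⊆ T := by
  rintro _ ⟨b, hb, hlub⟩
  exact hT {θ, b} (Set.insert_subset hθ (Set.singleton_subset_iff.2 (hΘ hb))) _ hlub

/-- A lub `u` of elements of `Θ ∪ ({θ} ⊔ Θ)` not all in `Θ` is `θ ⊔ max (u]_Θ`. -/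
theorem LubClosed.union_joinOne {Θ : Set (X → Option V)} (hc : LubClosed Θ)
    (θ : X → Option V) : LubClosed (Θ ∪ joinOne θ Θ) := by
  intro Ss hS u hu
  by_cases hSΘ : Ss ⊆ Θ
  · exact Or.inl (hc Ss hSΘ u hu)
  obtain ⟨a, haS, haΘ⟩ := Set.not_subset.1 hSΘ
  have hθu : PFle θ u :=
    (pfle_of_mem_joinOne ((hS haS).resolve_left haΘ)).trans (hu.1 a haS)
  set m := maxBelow Θ u
  obtain ⟨⟨hmΘ, hmu⟩, hmax⟩ := maxBelow_spec hc u
  refine Or.inr ⟨m, hmΘ, isUB_pair.2 ⟨hθu, hmu⟩, fun c hc' => hu.2 c fun a' ha' => ?_⟩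
  obtain ⟨hθc, hmc⟩ := isUB_pair.1 hc'
  rcases hS ha' with ha'Θ | ⟨b, hbΘ, hlub⟩
  · exact (hmax a' ⟨ha'Θ, hu.1 a' ha'⟩).trans hmc
  · have hba' : PFle b a' := (isUB_pair.1 hlub.1).2
    exact hlub.2 c (isUB_pair.2 ⟨hθc, (hmax b ⟨hbΘ, hba'.trans (hu.1 a' ha')⟩).trans hmc⟩)

theorem lubClosure_insert (θ : X → Option V) (B : Set (X → Option V)) :
    lubClosure (insert θ B) = lubClosure B ∪ joinOne θ (lubClosure B) := by
  have hc := lubClosed_lubClosure B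
  apply (lubClosure_minimal _ (hc.union_joinOne θ)).antisymm
  · have hsub := lubClosure_mono (Set.subset_insert θ B)
    exact Set.union_subset hsub ((lubClosed_lubClosure _).joinOne_subset
      (subset_lubClosure _ (Set.mem_insert θ B)) hsub)
  · exact Set.insert_subset (Or.inr (hc.self_mem_joinOne θ))
      ((subset_lubClosure B).trans Set.subset_union_left)

theorem thetaOf_nil : ThetaOf ([] : List (E × (X → Option V))) = {pbot} := by
  simp only [ThetaOf, List.not_mem_nil, exists_false, Set.ofPred_false, lubClosure_empty]

theorem thetaOf_append_singleton (τ : List (E × (X → Option V))) (ev : E × (X → Option V)) :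
    ThetaOf (τ ++ [ev]) = ThetaOf τ ∪ joinOne ev.2 (ThetaOf τ) := by
  have hinstances : {θ : X → Option V | ∃ e, (e, θ) ∈ τ ++ [ev]} =
      insert ev.2 {θ | ∃ e, (e, θ) ∈ τ} := by
    ext θ
    simp only [List.mem_append, List.mem_singleton, Set.mem_insert_iff]
    grind
  rw [ThetaOf, hinstances, lubClosure_insert]
  rfl

theorem snd_mem_thetaOf {τ : List (E × (X → Option V))} {p : E × (X → Option V)}
    (hp : p ∈ τ) : p.2 ∈ ThetaOf τ :=
  subset_lubClosure _ ⟨p.1, hp⟩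

theorem traceSlice_append_singleton_of_pfle {τ : List (E × (X → Option V))}
    {ev : E × (X → Option V)} {θ : X → Option V} (h : PFle ev.2 θ) :
    traceSlice (τ ++ [ev]) θ = traceSlice τ θ ++ [ev.1] := by
  simp [traceSlice, h]

theorem traceSlice_append_singleton_of_not_pfle {τ : List (E × (X → Option V))}
    {ev : E × (X → Option V)} {θ : X → Option V} (h : ¬ PFle ev.2 θ) :
    traceSlice (τ ++ [ev]) θ = traceSlice τ θ := by
  simp [traceSlice, h]

theorem traceSlice_maxBelow {Θ : Set (X → Option V)} (hc : LubClosed Θ)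
    {τ : List (E × (X → Option V))} (hτ : ∀ p ∈ τ, p.2 ∈ Θ) (θ : X → Option V) :
    traceSlice τ (maxBelow Θ θ) = traceSlice τ θ := by
  obtain ⟨⟨-, hmθ⟩, hmax⟩ := maxBelow_spec hc θ
  refine congrArg (List.map Prod.fst) (List.filter_congr fun p hp => decide_eq_decide.2 ?_)
  exact ⟨fun h => h.trans hmθ, fun h => hmax p.2 ⟨hτ p hp, h⟩⟩

theorem runMon_append_singleton {S : Type*} (σ : S → E → S) (s : S) (w : List E) (e : E) :
    runMon σ s (w ++ [e]) = σ (runMon σ s w) e := by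
  simp [runMon]

section Correctness

variable {S : Type*} (i : S) (σ : S → E → S)

structure BState.Correct (τ : List (E × (X → Option V))) (s : BState X V S) : Prop where
  th_eq : s.Th = ThetaOf τ
  delta_of_mem : ∀ θ ∈ s.Th, s.Δ θ = some (runMon σ i (traceSlice τ θ))
  delta_of_notMem : ∀ θ ∉ s.Th, s.Δ θ = none

variable {i σ}

theorem binit_correct : (Binit i : BState X V S).Correct i σ [] where
  th_eq := thetaOf_nil.symm
  delta_of_mem θ hθ := by
    rw [Set.mem_singleton_iff.1 hθ]
    simp [Binit, traceSlice, runMon]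
  delta_of_notMem θ hθ := if_neg hθ

namespace BState.Correct

variable {τ : List (E × (X → Option V))} {s : BState X V S}

theorem lubClosed (h : s.Correct i σ τ) : LubClosed s.Th :=
  h.th_eq ▸ lubClosed_lubClosure _

theorem snd_mem (h : s.Correct i σ τ) {p : E × (X → Option V)} (hp : p ∈ τ) : p.2 ∈ s.Th :=
  h.th_eq ▸ snd_mem_thetaOf hp

theorem delta_maxBelow (h : s.Correct i σ τ) (θ : X → Option V) :
    s.Δ (maxBelow s.Th θ) = some (runMon σ i (traceSlice τ θ)) := by
  rw [h.delta_of_mem _ (maxBelow_spec h.lubClosed θ).1.1,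
    traceSlice_maxBelow h.lubClosed (fun _ => h.snd_mem)]

theorem domain_delta (h : s.Correct i σ τ) : {θ | s.Δ θ ≠ none} = s.Th := by
  ext θ
  refine ⟨fun hθ => by_contra fun hnot => hθ (h.delta_of_notMem θ hnot), fun hθ => ?_⟩
  simp [h.delta_of_mem θ hθ]

theorem bstep (h : s.Correct i σ τ) (ev : E × (X → Option V)) :
    (Bstep σ s ev).Correct i σ (τ ++ [ev]) := by
  classical
  have hΔ : ∀ θ, (Bstep σ s ev).Δ θ = if θ ∈ joinOne ev.2 s.Th then
      (s.Δ (maxBelow s.Th θ)).map (fun st => σ st ev.1) else s.Δ θ := fun _ => rfl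
  refine ⟨?_, fun θ hθ => ?_, fun θ hθ => ?_⟩
  · rw [thetaOf_append_singleton, ← h.th_eq]
    rfl
  · rw [hΔ]
    split_ifs with hj
    · rw [h.delta_maxBelow, traceSlice_append_singleton_of_pfle (pfle_of_mem_joinOne hj),
        runMon_append_singleton]
      rfl
    · have hmem : θ ∈ s.Th := (hθ : θ ∈ s.Th ∪ _).resolve_right hj
      rw [traceSlice_append_singleton_of_not_pfle fun hle => hj (mem_joinOne_of_pfle hmem hle)]
      exact h.delta_of_mem θ hmem
  · have hθ' : θ ∉ s.Th ∪ joinOne ev.2 s.Th := hθ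
    rw [hΔ, if_neg fun hj => hθ' (Or.inr hj)]
    exact h.delta_of_notMem θ fun hmem => hθ' (Or.inl hmem)

end BState.Correct

theorem brun_correct (τ : List (E × (X → Option V))) : (Brun i σ τ).Correct i σ τ := by
  induction τ using List.reverseRecOn with
  | nil => exact binit_correct
  | append_singleton τ ev ih =>
    rw [Brun, List.foldl_append, List.foldl_cons, List.foldl_nil]
    exact ih.bstep ev

end Correctness

/-- Correctness of the parametric monitoring algorithm B⟨X⟩(M) (Theorem 2):
(1) Dom(B(M)(τ).Δ) = B(M)(τ).Θ = Θ_τ;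
(2) B(M)(τ).Δ(θ) = σ(i, τ↾θ) and B(M)(τ).Γ(θ) = γ(σ(i, τ↾θ)) for θ ∈ B(M)(τ).Θ;
(3) σ(i, τ↾θ) = B(M)(τ).Δ(max (θ]_{B(M)(τ).Θ}) and
    γ(σ(i, τ↾θ)) = B(M)(τ).Γ(max (θ]_{B(M)(τ).Θ}) for every parameter instance θ. -/
theorem stmt19 {S C : Type*} (i : S) (σ : S → E → S) (γ : S → C)
    (τ : List (E × (X → Option V))) :
    ({θ | (Brun i σ τ).Δ θ ≠ none} = (Brun i σ τ).Th ∧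
      (Brun i σ τ).Th = ThetaOf τ) ∧
    (∀ θ ∈ (Brun i σ τ).Th,
      (Brun i σ τ).Δ θ = some (runMon σ i (traceSlice τ θ)) ∧
      BGamma γ (Brun i σ τ) θ = some (γ (runMon σ i (traceSlice τ θ)))) ∧
    (∀ θ : X → Option V,
      (Brun i σ τ).Δ (maxBelow (Brun i σ τ).Th θ) =
        some (runMon σ i (traceSlice τ θ)) ∧
      BGamma γ (Brun i σ τ) (maxBelow (Brun i σ τ).Th θ) =
        some (γ (runMon σ i (traceSlice τ θ)))) := by
  have h : (Brun i σ τ).Correct i σ τ := brun_correct τ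
  refine ⟨⟨h.domain_delta, h.th_eq⟩, fun θ hθ => ?_, fun θ => ?_⟩
  · exact ⟨h.delta_of_mem θ hθ, by simp only [BGamma, h.delta_of_mem θ hθ, Option.map_some]⟩
  · exact ⟨h.delta_maxBelow θ, by simp only [BGamma, h.delta_maxBelow θ, Option.map_some]⟩
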